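/- arXiv:0710.4945 — 2 statements merged into one kernel-verified Lean document; each statement's English description precedes it below -/
import Mathlib

section
/- Let ≤ be a monomial ordering of ℕ^N, let I be an ideal of R = K[x₁,…,x_N], let f ∈ R, and let (I:f) = {g ∈ R : g·f ∈ I}. Let G be a Gröbner basis of (I:f) with respect to ≤, and let nf_G(R) be the K-linear span of all monomials x^α that are not divisible by lm(g) for any nonzero g ∈ G. Then I + (f) = I ⊕ nf_G(R)·f, an internal direct sum of K-linear subspaces of R. -/
open MvPolynomial

/-- `le` is a monomial ordering of `ℕ^N`: a total ordering compatible with addition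
whose smallest element is `0`. -/
def IsMonomialOrder (N : ℕ) (le : (Fin N →₀ ℕ) → (Fin N →₀ ℕ) → Prop) : Prop :=
  (∀ a b, le a b ∨ le b a) ∧
  (∀ a b, le a b → le b a → a = b) ∧
  (∀ a b c, le a b → le b c → le a c) ∧
  (∀ a b c, le a b → le (a + c) (b + c)) ∧
  (∀ a, le 0 a)

/-- `α` is the exponent of the leading monomial of `f` with respect to `le`. -/
def IsLM {K : Type*} [Field K] {N : ℕ} (le : (Fin N →₀ ℕ) → (Fin N →₀ ℕ) → Prop)
    (f : MvPolynomial (Fin N) K) (α : Fin N →₀ ℕ) : Prop :=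
  α ∈ f.support ∧ ∀ β ∈ f.support, le β α

/-- The monomial `x^β` divides the monomial `x^α`. -/
def MonDvd {N : ℕ} (β α : Fin N →₀ ℕ) : Prop := ∃ γ, α = β + γ

/-- `G` is a Gröbner basis of the ideal `I` with respect to `le`. -/
def IsGroebnerBasis {K : Type*} [Field K] {N : ℕ}
    (le : (Fin N →₀ ℕ) → (Fin N →₀ ℕ) → Prop)
    (G : Finset (MvPolynomial (Fin N) K)) (I : Ideal (MvPolynomial (Fin N) K)) : Prop :=
  (∀ g ∈ G, g ≠ 0) ∧ (∀ g ∈ G, g ∈ I) ∧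
  Ideal.span (G : Set (MvPolynomial (Fin N) K)) = I ∧
  ∀ f ∈ I, f ≠ 0 → ∀ α, IsLM le f α → ∃ g ∈ G, ∃ β, IsLM le g β ∧ MonDvd β α

/-- A Gröbner basis `G` is reduced: each element has leading coefficient `1`, and no
monomial in the support of `g ∈ G` is divisible by the leading monomial of another
element of `G`. -/
def IsReducedGB {K : Type*} [Field K] {N : ℕ}
    (le : (Fin N →₀ ℕ) → (Fin N →₀ ℕ) → Prop)
    (G : Finset (MvPolynomial (Fin N) K)) : Prop :=
  ∀ g ∈ G, (∀ α, IsLM le g α → coeff α g = 1) ∧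
    ∀ g' ∈ G, g' ≠ g → ∀ α ∈ g.support, ∀ β, IsLM le g' β → ¬ MonDvd β α

/-- `D(N,d) = 2·(d²/2 + d)^(2^(N−1))`. -/
def Dub (N d : ℕ) : ℚ := 2 * ((d : ℚ) ^ 2 / 2 + (d : ℚ)) ^ (2 ^ (N - 1))

/-!
Read `le` as a Mathlib `MonomialOrder`. Dividing by `G` writes every polynomial as an element
of `J` plus a remainder in `nf_G(R)`, and a nonzero element of `J ∩ nf_G(R)` would have its
leading monomial divisible by some `lm g`; hence `R = J ⊕ nf_G(R)` as `K`-spaces. Multiplication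
by `f` sends `R` onto `(f)` and `J = (I : f)` into `I`, and its preimage of `I` is exactly `J`,
so `I + (f) = I ⊕ nf_G(R)·f`.
-/

namespace IsMonomialOrder

variable {N : ℕ} {le : (Fin N →₀ ℕ) → (Fin N →₀ ℕ) → Prop}

/-- A copy of `Fin N →₀ ℕ` on which `≤` is `le` rather than the pointwise order. -/
def Syn (_ : IsMonomialOrder N le) : Type := Fin N →₀ ℕ

variable (hle : IsMonomialOrder N le)

noncomputable instance : AddCommMonoid hle.Syn := inferInstanceAs (AddCommMonoid (Fin N →₀ ℕ))

noncomputable instance : LinearOrder hle.Syn where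
  le := le
  le_refl a := (hle.1 a a).elim id id
  le_trans := hle.2.2.1
  le_antisymm := hle.2.1
  le_total := hle.1
  toDecidableLE := Classical.decRel _

instance : IsOrderedAddMonoid hle.Syn where
  add_le_add_left a b h c := hle.2.2.2.1 a b c h

noncomputable def toSyn : (Fin N →₀ ℕ) ≃+ hle.Syn := AddEquiv.refl _

theorem monotone_toSyn : Monotone hle.toSyn := by
  intro a b hab
  obtain ⟨c, rfl⟩ := le_iff_exists_add.mp hab
  show le a (a + c)
  simpa [add_comm] using hle.2.2.2.1 0 c a (hle.2.2.2.2 c)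

instance : WellQuasiOrderedLE hle.Syn :=
  hle.monotone_toSyn.wellQuasiOrderedLE_of_wellQuasiOrderedLE_of_surjective
    hle.toSyn.surjective

noncomputable def toMonomialOrder : MonomialOrder (Fin N) where
  syn := hle.Syn
  toSyn := hle.toSyn
  toSyn_monotone := hle.monotone_toSyn

theorem isLM_iff {K : Type*} [Field K] {p : MvPolynomial (Fin N) K} {α : Fin N →₀ ℕ} :
    IsLM le p α ↔ p ≠ 0 ∧ hle.toMonomialOrder.degree p = α := by
  constructor
  · rintro ⟨hα, hmax⟩
    have hp : p ≠ 0 := support_nonempty.mp ⟨α, hα⟩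
    exact ⟨hp, hle.2.1 _ _ (hmax _ (hle.toMonomialOrder.degree_mem_support hp))
      (hle.toMonomialOrder.le_degree hα)⟩
  · rintro ⟨hp, rfl⟩
    exact ⟨hle.toMonomialOrder.degree_mem_support hp, fun _ => hle.toMonomialOrder.le_degree⟩

end IsMonomialOrder

theorem MvPolynomial.span_monomial_one_eq_restrictSupport {σ R : Type*} [CommSemiring R]
    (P : (σ →₀ ℕ) → Prop) :
    Submodule.span R {m : MvPolynomial σ R | ∃ α, m = monomial α 1 ∧ P α} =
      restrictSupport R {α | P α} := by
  rw [restrictSupport_eq_span]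
  congr 1
  ext m
  exact ⟨fun ⟨α, h, hα⟩ => ⟨α, hα, h.symm⟩, fun ⟨α, hα, h⟩ => ⟨α, h.symm, hα⟩⟩

theorem IsGroebnerBasis.isCompl_restrictSupport {K : Type*} [Field K] {N : ℕ}
    {le : (Fin N →₀ ℕ) → (Fin N →₀ ℕ) → Prop} (hle : IsMonomialOrder N le)
    {G : Finset (MvPolynomial (Fin N) K)} {J : Ideal (MvPolynomial (Fin N) K)}
    (hG : IsGroebnerBasis le G J) :
    IsCompl (J.restrictScalars K)
      (restrictSupport K {α | ∀ g ∈ G, ∀ β, IsLM le g β → ¬ MonDvd β α}) := by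
  set m := hle.toMonomialOrder
  constructor
  · rw [Submodule.disjoint_def]
    intro r hrJ hrS
    by_contra hr
    obtain ⟨g, hg, β, hβ, hdvd⟩ := hG.2.2.2 r hrJ hr _ (hle.isLM_iff.mpr ⟨hr, rfl⟩)
    exact hrS (m.degree_mem_support hr) g hg β hβ hdvd
  · rw [codisjoint_iff, eq_top_iff]
    intro p _
    obtain ⟨c, r, rfl, -, hr⟩ :=
      m.div_set (B := G) (fun g hg => m.isUnit_leadingCoeff.mpr (hG.1 g hg)) p
    refine Submodule.add_mem_sup ?_ ?_
    · rw [Submodule.restrictScalars_mem, ← hG.2.2.1]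
      exact (Finsupp.mem_span_iff_linearCombination _ _ _).mpr ⟨c, rfl⟩
    · intro α hα g hg β hβ ⟨γ, hγ⟩
      obtain ⟨-, rfl⟩ := hle.isLM_iff.mp hβ
      exact hr α hα g hg (hγ ▸ le_self_add)

namespace Submodule

variable {R M M' : Type*} [Semiring R] [AddCommMonoid M] [AddCommMonoid M'] [Module R M]
  [Module R M'] {φ : M →ₗ[R] M'} {P : Submodule R M'} {C : Submodule R M}

theorem sup_range_eq_sup_map_of_codisjoint (h : Codisjoint (P.comap φ) C) :
    P ⊔ LinearMap.range φ = P ⊔ C.map φ := by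
  rw [← map_top, ← h.eq_top, map_sup, ← sup_assoc, sup_eq_left.mpr (map_comap_le φ P)]

theorem disjoint_map_of_disjoint_comap (h : Disjoint (P.comap φ) C) :
    Disjoint P (C.map φ) := by
  rw [disjoint_def]
  rintro _ hx ⟨c, hc, rfl⟩
  rw [(disjoint_def.mp h) c hx hc, map_zero]

end Submodule

theorem ideal_plus_principal_decomposition_general {K : Type*} [Field K]
    {N : ℕ}
    (le : (Fin N →₀ ℕ) → (Fin N →₀ ℕ) → Prop) (hle : IsMonomialOrder N le)
    (I : Ideal (MvPolynomial (Fin N) K)) (f : MvPolynomial (Fin N) K)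
    (J : Ideal (MvPolynomial (Fin N) K))
    (hJ : ∀ g, g ∈ J ↔ g * f ∈ I)  -- `J = (I : f)`
    (G : Finset (MvPolynomial (Fin N) K)) (hG : IsGroebnerBasis le G J)
    (NF : Submodule K (MvPolynomial (Fin N) K))
    -- `NF = nf_G(R)`, the span of the monomials not divisible by any `lm g`, `g ∈ G`
    (hNF : NF = Submodule.span K {m : MvPolynomial (Fin N) K | ∃ α : Fin N →₀ ℕ,
      m = monomial α 1 ∧ ∀ g ∈ G, ∀ β, IsLM le g β → ¬ MonDvd β α}) :
    Submodule.restrictScalars K (I + Ideal.span {f}) =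
        Submodule.restrictScalars K I ⊔ Submodule.map (LinearMap.mulRight K f) NF ∧
      Disjoint (Submodule.restrictScalars K I)
        (Submodule.map (LinearMap.mulRight K f) NF) := by
  have hJ_comap : J.restrictScalars K = (I.restrictScalars K).comap (LinearMap.mulRight K f) :=
    Submodule.ext hJ
  have hspan_f : (Ideal.span {f}).restrictScalars K = LinearMap.range (LinearMap.mulRight K f) := by
    ext x
    simp [Ideal.mem_span_singleton']
  have hC := hG.isCompl_restrictSupport hle
  rw [hJ_comap, ← span_monomial_one_eq_restrictSupport, ← hNF] at hC
  rw [Submodule.add_eq_sup, Submodule.restrictScalars_sup, hspan_f]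
  exact ⟨Submodule.sup_range_eq_sup_map_of_codisjoint hC.2,
    Submodule.disjoint_map_of_disjoint_comap hC.1⟩

theorem ideal_plus_principal_decomposition {K : Type*} [Field K]
    {N : ℕ} (hN : 1 ≤ N)
    (le : (Fin N →₀ ℕ) → (Fin N →₀ ℕ) → Prop) (hle : IsMonomialOrder N le)
    (I : Ideal (MvPolynomial (Fin N) K)) (f : MvPolynomial (Fin N) K)
    (J : Ideal (MvPolynomial (Fin N) K))
    (hJ : ∀ g, g ∈ J ↔ g * f ∈ I)  -- `J = (I : f)`
    (G : Finset (MvPolynomial (Fin N) K)) (hG : IsGroebnerBasis le G J)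
    (NF : Submodule K (MvPolynomial (Fin N) K))
    -- `NF = nf_G(R)`, the span of the monomials not divisible by any `lm g`, `g ∈ G`
    (hNF : NF = Submodule.span K {m : MvPolynomial (Fin N) K | ∃ α : Fin N →₀ ℕ,
      m = monomial α 1 ∧ ∀ g ∈ G, ∀ β, IsLM le g β → ¬ MonDvd β α}) :
    Submodule.restrictScalars K (I + Ideal.span {f}) =
        Submodule.restrictScalars K I ⊔ Submodule.map (LinearMap.mulRight K f) NF ∧
      Disjoint (Submodule.restrictScalars K I)
        (Submodule.map (LinearMap.mulRight K f) NF) :=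
  ideal_plus_principal_decomposition_general le hle I f J hJ G hG NF hNF
end

section
/- Let M be a homogeneous K-linear subspace of R = K[x₁,…,x_N] admitting a cone decomposition 𝒟. Then for every integer e > deg 𝒟, the Hilbert function of M satisfies H_M(e) = Σ_{(w,y,h)∈𝒟⁺} C(e − |w| − deg(h) + #y − 1, #y − 1), where C(·,·) denotes the binomial coefficient; in particular H_M agrees with a polynomial in e for all e > deg 𝒟. -/
open MvPolynomial
open scoped Classical

/-- A cone triple `(w, y, h)`: a multi-index `w`, a set `y` of variables, and a
polynomial `h`. -/
abbrev ConeTriple (N : ℕ) (K : Type*) [Field K] :=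
  (Fin N →₀ ℕ) × Finset (Fin N) × MvPolynomial (Fin N) K

/-- The degree `|w| + deg h` of a cone triple `(w, y, h)`. -/
noncomputable def coneDeg {N : ℕ} {K : Type*} [Field K] (p : ConeTriple N K) : ℕ :=
  (∑ i, p.1 i) + p.2.2.totalDegree

/-- The cone `C(w,y,h)`: the `K`-linear span of all `x^(w+γ)·h` with `γ` supported
on `y`. -/
noncomputable def cone {N : ℕ} {K : Type*} [Field K] (p : ConeTriple N K) :
    Submodule K (MvPolynomial (Fin N) K) :=
  Submodule.span K {q | ∃ γ : Fin N →₀ ℕ, (∀ i ∉ p.2.1, γ i = 0) ∧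
    q = monomial (p.1 + γ) 1 * p.2.2}

/-- A homogeneous `K`-linear subspace of the polynomial ring. -/
def IsHomogeneousSubspace {N : ℕ} {K : Type*} [Field K]
    (M : Submodule K (MvPolynomial (Fin N) K)) : Prop :=
  ∀ f ∈ M, ∀ e : ℕ, homogeneousComponent e f ∈ M

/-- `𝒟` is a cone decomposition of `M`: each triple consists of a nonzero homogeneous
`h`, each cone is contained in `M`, and `M` is the internal direct sum of the cones. -/
def IsConeDecomp {N : ℕ} {K : Type*} [Field K] (𝒟 : Finset (ConeTriple N K))
    (M : Submodule K (MvPolynomial (Fin N) K)) : Prop :=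
  (∀ p ∈ 𝒟, p.2.2 ≠ 0 ∧ ∃ e : ℕ, p.2.2.IsHomogeneous e) ∧
  (∀ p ∈ 𝒟, cone p ≤ M) ∧
  M = (⨆ p ∈ 𝒟, cone p) ∧
  ∀ p ∈ 𝒟, Disjoint (cone p) (⨆ q ∈ 𝒟.erase p, cone q)

/-- `𝒟` is `d`-standard. -/
def IsStandardDecomp {N : ℕ} {K : Type*} [Field K] (d : ℕ)
    (𝒟 : Finset (ConeTriple N K)) : Prop :=
  (∀ p ∈ 𝒟, p.2.1.Nonempty → d ≤ coneDeg p) ∧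
  ∀ p ∈ 𝒟, p.2.1.Nonempty → ∀ d', d ≤ d' → d' ≤ coneDeg p →
    ∃ q ∈ 𝒟, q.2.1.Nonempty ∧ coneDeg q = d' ∧ p.2.1.card ≤ q.2.1.card

/-- The degree of a cone decomposition, as an element of `ℕ ∪ {−∞}`. -/
noncomputable def decompDeg {N : ℕ} {K : Type*} [Field K] (𝒟 : Finset (ConeTriple N K)) :
    WithBot ℕ :=
  (𝒟.image coneDeg).max

/-!
In degree `e`, the cone `C(w, y, h)` has the basis `x^(w+γ) h`, where `γ` runs over the exponents
supported on `y` with `|γ| = e - |w| - deg h`: these span because `h` is homogeneous, and they are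
independent because multiplication by `h ≠ 0` is injective. Such `γ` are multisets of size
`e - |w| - deg h` on `y`, counted by a binomial coefficient, which vanishes for `y = ∅` once
`e > |w| + deg h` and is otherwise the value at `e` of a polynomial. Since `M` is the direct sum of
its cones, these bases together form a basis of `M_(e)`.
-/

open MvPolynomial Finset

theorem linearIndependent_sigma_of_iSupIndep {R M η : Type*} [Ring R] [AddCommGroup M]
    [Module R M] {ιs : η → Type*} {f : ∀ j, ιs j → M} {p : η → Submodule R M}
    (hp : iSupIndep p) (hfp : ∀ j i, f j i ∈ p j) (hf : ∀ j, LinearIndependent R (f j)) :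
    LinearIndependent R fun ji : Σ j, ιs j => f ji.1 ji.2 := by
  have hspan : ∀ j, Submodule.span R (Set.range (f j)) ≤ p j := fun j =>
    Submodule.span_le.mpr (Set.range_subset_iff.mpr (hfp j))
  exact linearIndependent_iUnion_finite hf fun j t _ hjt =>
    (hp.disjoint_biSup hjt).mono (hspan j) (iSup₂_mono fun i _ => hspan i)

theorem Finset.card_finsuppAntidiag_nat_eq_choose_pred {ι : Type*} [DecidableEq ι]
    {s : Finset ι} (hs : s.Nonempty) (n : ℕ) :
    #(s.finsuppAntidiag n) = (n + #s - 1).choose (#s - 1) := by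
  have := hs.card_pos
  rw [card_finsuppAntidiag_nat_eq_choose, add_comm n]
  exact Nat.choose_symm_of_eq_add (by omega : #s + n - 1 = n + (#s - 1))

theorem Finset.sum_card_finsuppAntidiag_sub_eq_sum_choose {α ι : Type*} [DecidableEq ι]
    (t : Finset α) (s : α → Finset ι) (d : α → ℕ) {e : ℕ} (he : ∀ a ∈ t, d a < e) :
    ∑ a ∈ t, #((s a).finsuppAntidiag (e - d a)) =
      ∑ a ∈ t with (s a).Nonempty, (e - d a + #(s a) - 1).choose (#(s a) - 1) := by
  rw [← sum_filter_of_ne fun a ha hne => nonempty_iff_ne_empty.mpr fun hs => hne ?_]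
  · exact sum_congr rfl fun a ha => card_finsuppAntidiag_nat_eq_choose_pred (mem_filter.mp ha).2 _
  · rw [hs, finsuppAntidiag_empty_of_ne_zero (by have := he a ha; omega), card_empty]

section Cone

variable {N : ℕ} {K : Type*} [Field K]

noncomputable def coneGen (p : ConeTriple N K) (γ : Fin N →₀ ℕ) : MvPolynomial (Fin N) K :=
  monomial (p.1 + γ) 1 * p.2.2

theorem coneGen_mem_cone (p : ConeTriple N K) {γ : Fin N →₀ ℕ} (hγ : γ.support ⊆ p.2.1) :
    coneGen p γ ∈ cone p :=
  Submodule.subset_span ⟨γ, fun _ hi => Finsupp.notMem_support_iff.mp fun h => hi (hγ h), rfl⟩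

theorem isHomogeneous_coneGen {p : ConeTriple N K}
    (hh : p.2.2.IsHomogeneous p.2.2.totalDegree) (γ : Fin N →₀ ℕ) :
    (coneGen p γ).IsHomogeneous (coneDeg p + γ.degree) := by
  have := (isHomogeneous_monomial (1 : K) (rfl : (p.1 + γ).degree = _)).mul hh
  rwa [map_add, Finsupp.degree_eq_sum p.1, add_right_comm] at this

theorem coneGen_mem_homogeneousSubmodule {p : ConeTriple N K}
    (hh : p.2.2.IsHomogeneous p.2.2.totalDegree) {e : ℕ} (he : coneDeg p ≤ e)
    {γ : Fin N →₀ ℕ} (hγ : γ ∈ p.2.1.finsuppAntidiag (e - coneDeg p)) :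
    coneGen p γ ∈ homogeneousSubmodule (Fin N) K e := by
  have hdeg : γ.degree = e - coneDeg p := (mem_finsuppAntidiag'.mp hγ).1
  rw [mem_homogeneousSubmodule, show e = coneDeg p + γ.degree by omega]
  exact isHomogeneous_coneGen hh γ

theorem linearIndependent_coneGen {p : ConeTriple N K} (h0 : p.2.2 ≠ 0) :
    LinearIndependent K (coneGen p) := by
  have hmul := (basisMonomials (Fin N) K).linearIndependent.map' (LinearMap.mulRight K p.2.2)
    (LinearMap.ker_eq_bot.mpr (mul_left_injective₀ h0))
  rw [coe_basisMonomials] at hmul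
  exact hmul.comp _ (add_right_injective p.1)

theorem homogeneousComponent_mem_span_coneGen {p : ConeTriple N K}
    (hh : p.2.2.IsHomogeneous p.2.2.totalDegree) {q : MvPolynomial (Fin N) K} (hq : q ∈ cone p)
    (e : ℕ) : homogeneousComponent e q ∈ Submodule.span K
      (Set.range fun γ : p.2.1.finsuppAntidiag (e - coneDeg p) => coneGen p γ) := by
  suffices cone p ≤ (Submodule.span K _).comap (homogeneousComponent e) from this hq
  rw [cone, Submodule.span_le]
  rintro _ ⟨γ, hγ, rfl⟩
  have hsupp : γ.support ⊆ p.2.1 := fun i hi =>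
    by_contra fun h => Finsupp.mem_support_iff.mp hi (hγ i h)
  rw [SetLike.mem_coe, Submodule.mem_comap, ← coneGen,
    homogeneousComponent_of_mem ((mem_homogeneousSubmodule _ _).mpr (isHomogeneous_coneGen hh γ))]
  split_ifs with hdeg
  · have hγ : γ ∈ p.2.1.finsuppAntidiag (e - coneDeg p) := by
      refine mem_finsuppAntidiag'.mpr ⟨?_, hsupp⟩
      rw [hdeg, Nat.add_sub_cancel_left]
      exact (Finsupp.degree_apply γ).symm
    exact Submodule.subset_span ⟨⟨γ, hγ⟩, rfl⟩
  · exact zero_mem _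

end Cone

namespace IsConeDecomp

variable {N : ℕ} {K : Type*} [Field K] {𝒟 : Finset (ConeTriple N K)}
  {M : Submodule K (MvPolynomial (Fin N) K)}

theorem isHomogeneous_totalDegree (h𝒟 : IsConeDecomp 𝒟 M) {p : ConeTriple N K}
    (hp : p ∈ 𝒟) : p.2.2.IsHomogeneous p.2.2.totalDegree := by
  obtain ⟨h0, n, hn⟩ := h𝒟.1 p hp
  rwa [hn.totalDegree h0]

theorem iSupIndep_cone (h𝒟 : IsConeDecomp 𝒟 M) : iSupIndep fun p : 𝒟 => cone p.1 :=
  iSupIndep_def.mpr fun p => (h𝒟.2.2.2 p p.2).mono_right <| iSup₂_le fun q hq =>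
    le_biSup cone (mem_erase.mpr ⟨fun h => hq (Subtype.ext h), q.2⟩)

theorem finrank_inf_homogeneousSubmodule (h𝒟 : IsConeDecomp 𝒟 M) {e : ℕ}
    (he : ∀ p ∈ 𝒟, coneDeg p ≤ e) :
    Module.finrank K ↥(M ⊓ homogeneousSubmodule (Fin N) K e) =
      ∑ p ∈ 𝒟, #(p.2.1.finsuppAntidiag (e - coneDeg p)) := by
  let ι (p : 𝒟) := p.1.2.1.finsuppAntidiag (e - coneDeg p.1)
  let v (x : Σ p, ι p) := coneGen x.1.1 x.2
  have hsupp (p : 𝒟) (γ : ι p) : γ.1.support ⊆ p.1.2.1 := (mem_finsuppAntidiag.mp γ.2).2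
  have hli : LinearIndependent K v :=
    linearIndependent_sigma_of_iSupIndep (f := fun (p : 𝒟) (γ : ι p) => coneGen p.1 γ)
      h𝒟.iSupIndep_cone
      (fun p γ => coneGen_mem_cone p.1 (hsupp p γ))
      fun p => (linearIndependent_coneGen (h𝒟.1 p p.2).1).comp Subtype.val Subtype.val_injective
  have hspan : Submodule.span K (Set.range v) = M ⊓ homogeneousSubmodule (Fin N) K e := by
    refine le_antisymm (Submodule.span_le.mpr ?_) fun q ⟨hqM, hqe⟩ => ?_
    · rintro _ ⟨⟨p, γ⟩, rfl⟩
      exact ⟨h𝒟.2.1 p p.2 (coneGen_mem_cone p.1 (hsupp p γ)),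
        coneGen_mem_homogeneousSubmodule (h𝒟.isHomogeneous_totalDegree p.2) (he p p.2) γ.2⟩
    · have hM : M ≤ (Submodule.span K (Set.range v)).comap (homogeneousComponent e) := by
        rw [h𝒟.2.2.1]
        refine iSup₂_le fun p hp q hq => Submodule.span_mono ?_
          (homogeneousComponent_mem_span_coneGen (h𝒟.isHomogeneous_totalDegree hp) hq e)
        rintro _ ⟨γ, rfl⟩
        exact ⟨⟨⟨p, hp⟩, γ⟩, rfl⟩
      simpa [homogeneousComponent_of_mem hqe] using hM hqM
  rw [← hspan, finrank_span_eq_card hli, Fintype.card_sigma]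
  simp only [Fintype.card_coe]
  exact sum_coe_sort 𝒟 fun p => #(p.2.1.finsuppAntidiag (e - coneDeg p))

end IsConeDecomp

theorem hilbert_function_of_cone_decomposition_general {K : Type*} [Field K]
    {N : ℕ} (M : Submodule K (MvPolynomial (Fin N) K))
    (𝒟 : Finset (ConeTriple N K)) (h𝒟 : IsConeDecomp 𝒟 M) :
    ∃ P : Polynomial ℚ, ∀ e : ℕ, (∀ p ∈ 𝒟, coneDeg p < e) →
      Module.finrank K ↥(M ⊓ homogeneousSubmodule (Fin N) K e) =
        (∑ p ∈ 𝒟.filter (fun p => p.2.1.Nonempty),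
          (e - coneDeg p + p.2.1.card - 1).choose (p.2.1.card - 1)) ∧
      (Module.finrank K ↥(M ⊓ homogeneousSubmodule (Fin N) K e) : ℚ) =
        P.eval (e : ℚ) := by
  refine ⟨∑ p ∈ 𝒟.filter (fun p => p.2.1.Nonempty),
    Polynomial.preHilbertPoly ℚ (#p.2.1 - 1) (coneDeg p), fun e he => ?_⟩
  have hrank : Module.finrank K ↥(M ⊓ homogeneousSubmodule (Fin N) K e) =
      ∑ p ∈ 𝒟.filter (fun p => p.2.1.Nonempty),
        (e - coneDeg p + #p.2.1 - 1).choose (#p.2.1 - 1) := by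
    rw [h𝒟.finrank_inf_homogeneousSubmodule fun p hp => (he p hp).le]
    exact sum_card_finsuppAntidiag_sub_eq_sum_choose 𝒟 (fun p => p.2.1) coneDeg he
  refine ⟨hrank, ?_⟩
  rw [hrank, Nat.cast_sum, Polynomial.eval_finsetSum]
  refine sum_congr rfl fun p hp => ?_
  obtain ⟨hpD, hy⟩ := mem_filter.mp hp
  rw [Polynomial.preHilbertPoly_eq_choose_sub_add ℚ _ (he p hpD).le]
  have := hy.card_pos
  congr 2
  omega

theorem hilbert_function_of_cone_decomposition {K : Type*} [Field K]
    {N : ℕ} (hN : 1 ≤ N) (M : Submodule K (MvPolynomial (Fin N) K))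
    (hM : IsHomogeneousSubspace M)
    (𝒟 : Finset (ConeTriple N K)) (h𝒟 : IsConeDecomp 𝒟 M) :
    ∃ P : Polynomial ℚ, ∀ e : ℕ, (∀ p ∈ 𝒟, coneDeg p < e) →
      Module.finrank K ↥(M ⊓ homogeneousSubmodule (Fin N) K e) =
        (∑ p ∈ 𝒟.filter (fun p => p.2.1.Nonempty),
          (e - coneDeg p + p.2.1.card - 1).choose (p.2.1.card - 1)) ∧
      (Module.finrank K ↥(M ⊓ homogeneousSubmodule (Fin N) K e) : ℚ) =
        P.eval (e : ℚ) :=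
  hilbert_function_of_cone_decomposition_general M 𝒟 h𝒟
end
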